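/- Let 0 ≤ ℓ ≤ m ≤ n. Then: (a) for every γ = {γ_1 < ⋯ < γ_ℓ} ⊆ {1,…,m}, Σ_{β ⊆ {1,…,n}, |β| = ℓ} c(β,γ) = C(n, m); and (b) for every β = {β_1 < ⋯ < β_ℓ} ⊆ {1,…,n}, Σ_{γ ⊆ {1,…,m}, |γ| = ℓ} c(β,γ) = C(n−ℓ, m−ℓ). -/

import Mathlib

/-!
Write a strictly increasing `β : Fin ℓ → Fin n` through its gaps
`g_k = β_{k+1} - β_k - 1` (`k = 0, …, ℓ`, with `β_0 = 0`, `β_{ℓ+1} = n + 1`): this is a bijection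
onto the `(ℓ+1)`-tuples of naturals with sum `n - ℓ`, and `c(β,γ) = ∏_k C(g_k, h_k)` where `h` are
the gaps of `γ`. Summing over `γ` is then the multinomial Vandermonde identity
`∑_{|h| = M} ∏_k C(g_k, h_k) = C(|g|, M)`, while summing over `β` is its upper-index analogue
`∑_{|g| = N} ∏_{k ≤ r} C(g_k, h_k) = C(N + r, |h| + r)`, obtained by induction on `r` from
`∑_{a+b=N} C(a,c) C(b,d) = C(N+1, c+d+1)`.
-/

noncomputable section

/-- Extend a (1-indexed) sequence `β_1 < ⋯ < β_ℓ` of positions in `{1,…,n}` by the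
conventions `β_0 = 0` and `β_{ℓ+1} = n+1`.  Here `β : Fin ℓ → ℕ` lists `β_1,…,β_ℓ`. -/
def extSeq (n ℓ : ℕ) (β : Fin ℓ → ℕ) (k : Fin (ℓ + 2)) : ℕ :=
  if h0 : (k : ℕ) = 0 then 0
  else if h1 : (k : ℕ) = ℓ + 1 then n + 1
  else β ⟨(k : ℕ) - 1, by have hk := k.isLt; omega⟩

/-- The combinatorial coefficient
`c(β,γ) = ∏_{k=1}^{ℓ+1} C(β_k - β_{k-1} - 1, γ_k - γ_{k-1} - 1)`,
with `β_0 = γ_0 = 0`, `β_{ℓ+1} = n+1`, `γ_{ℓ+1} = m+1`.  The subsets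
`β ⊆ {1,…,n}` and `γ ⊆ {1,…,m}` are encoded by strictly increasing maps
`Fin ℓ → Fin n` and `Fin ℓ → Fin m` (0-indexed, whence the `+ 1`'s). -/
def gapCoeff (n m ℓ : ℕ) (β : Fin ℓ → Fin n) (γ : Fin ℓ → Fin m) : ℕ :=
  ∏ k : Fin (ℓ + 1),
    Nat.choose
      (extSeq n ℓ (fun i => (β i : ℕ) + 1) k.succ
        - extSeq n ℓ (fun i => (β i : ℕ) + 1) k.castSucc - 1)
      (extSeq m ℓ (fun i => (γ i : ℕ) + 1) k.succ
        - extSeq m ℓ (fun i => (γ i : ℕ) + 1) k.castSucc - 1)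

open Finset Finset.Nat

theorem sum_antidiagonalTuple_succ {M : Type*} [AddCommMonoid M] (k n : ℕ)
    (f : (Fin (k + 1) → ℕ) → M) :
    ∑ x ∈ antidiagonalTuple (k + 1) n, f x
      = ∑ p ∈ antidiagonal n, ∑ x ∈ antidiagonalTuple k p.2, f (Fin.cons p.1 x) := by
  rw [sum_sigma']
  symm
  refine sum_nbij' (fun q ↦ Fin.cons q.1.1 q.2) (fun x ↦ ⟨(x 0, ∑ i, Fin.tail x i), Fin.tail x⟩)
    ?_ ?_ ?_ ?_ (fun _ _ ↦ rfl)
  · rintro ⟨⟨a, b⟩, x⟩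
    simp +contextual [mem_antidiagonalTuple, Fin.sum_cons]
  · intro x
    simp [mem_antidiagonalTuple, Fin.sum_univ_succ, Fin.tail]
  · rintro ⟨⟨a, b⟩, x⟩
    simp +contextual [mem_antidiagonalTuple]
  · intro x _
    simp

/-- Stated with the shift `e` so that the induction in `sum_antidiagonalTuple_prod_choose_upper`
closes. -/
theorem sum_antidiagonal_choose_mul_choose_add (e d : ℕ) : ∀ N c : ℕ,
    ∑ p ∈ antidiagonal N, p.1.choose c * (p.2 + e).choose (d + e)
      = (N + e + 1).choose (c + d + e + 1) := by
  intro N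
  induction N with
  | zero =>
    rintro (_ | c)
    · simp [Nat.choose_succ_succ e (d + e), Nat.choose_eq_zero_of_lt]
    · simp [Nat.choose_eq_zero_of_lt]
  | succ N ih =>
    rw [show N + 1 + e + 1 = N + e + 1 + 1 by ring]
    rintro (_ | c)
    · have hsum := ih 0
      simp only [Nat.choose_zero_right, one_mul] at hsum ⊢
      rw [Nat.sum_antidiagonal_succ, hsum, Nat.choose_succ_succ' (N + e + 1)]
      ring_nf
    · have pascal (p : ℕ × ℕ) : (p.1 + 1).choose (c + 1) = p.1.choose c + p.1.choose (c + 1) :=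
        Nat.choose_succ_succ _ _
      rw [Nat.sum_antidiagonal_succ]
      simp only [pascal, add_mul, sum_add_distrib, ih, Nat.choose_zero_succ, zero_mul, zero_add]
      rw [Nat.choose_succ_succ' (N + e + 1)]
      ring_nf

theorem sum_antidiagonalTuple_prod_choose_lower : ∀ {r : ℕ} (g : Fin r → ℕ) (M : ℕ),
    ∑ h ∈ antidiagonalTuple r M, ∏ k, (g k).choose (h k) = (∑ k, g k).choose M
  | 0, g, M => by cases M <;> simp
  | r + 1, g, M => by
    rw [sum_antidiagonalTuple_succ, Fin.sum_univ_succ, Nat.add_choose_eq]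
    refine sum_congr rfl fun p _ ↦ ?_
    simp only [Fin.prod_univ_succ, Fin.cons_zero, Fin.cons_succ, ← mul_sum,
      sum_antidiagonalTuple_prod_choose_lower (fun k ↦ g k.succ)]

theorem sum_antidiagonalTuple_prod_choose_upper : ∀ {r : ℕ} (h : Fin (r + 1) → ℕ) (N : ℕ),
    ∑ g ∈ antidiagonalTuple (r + 1) N, ∏ k, (g k).choose (h k) = (N + r).choose (∑ k, h k + r)
  | 0, h, N => by simp
  | r + 1, h, N => by
    rw [sum_antidiagonalTuple_succ, Fin.sum_univ_succ]
    calc _ = ∑ p ∈ antidiagonal N,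
          p.1.choose (h 0) * (p.2 + r).choose (∑ k : Fin (r + 1), h k.succ + r) := by
          refine sum_congr rfl fun p _ ↦ ?_
          simp only [Fin.prod_univ_succ (n := r + 1), Fin.cons_zero, Fin.cons_succ, ← mul_sum,
            sum_antidiagonalTuple_prod_choose_upper (fun k : Fin (r + 1) ↦ h k.succ)]
      _ = _ := by
        rw [sum_antidiagonal_choose_mul_choose_add]
        ring_nf

theorem Fin.partialSum_last {M : Type*} [AddCommMonoid M] {r : ℕ} (f : Fin r → M) :
    Fin.partialSum f (Fin.last r) = ∑ i, f i := by
  rw [Fin.partialSum, Fin.val_last, List.take_of_length_le (List.length_ofFn).le, List.sum_ofFn]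

theorem partialSum_add_one_last {r : ℕ} (g : Fin r → ℕ) :
    Fin.partialSum (g + 1) (Fin.last r) = ∑ i, g i + r := by
  simp [Fin.partialSum_last, sum_add_distrib]

theorem strictMono_partialSum_add_one {r : ℕ} (g : Fin r → ℕ) :
    StrictMono (Fin.partialSum (g + 1)) :=
  Fin.strictMono_iff_lt_succ.2 fun i ↦ by simp [Fin.partialSum_succ]

theorem partialSum_add_one_succ_pos {r : ℕ} (g : Fin r → ℕ) (i : Fin r) :
    0 < Fin.partialSum (g + 1) i.succ := by
  simp [Fin.partialSum_succ]

def gaps {r : ℕ} (a : Fin (r + 1) → ℕ) (i : Fin r) : ℕ := a i.succ - a i.castSucc - 1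

theorem add_partialSum_gaps_add_one {r : ℕ} {a : Fin (r + 1) → ℕ} (ha : StrictMono a)
    (k : Fin (r + 1)) : a 0 + Fin.partialSum (gaps a + 1) k = a k := by
  induction k using Fin.induction with
  | zero => simp
  | succ i ih =>
    have := ha i.castSucc_lt_succ
    rw [Fin.partialSum_succ, ← add_assoc, ih, Pi.add_apply, gaps, Pi.one_apply]
    omega

theorem gaps_partialSum_add_one {r : ℕ} (g : Fin r → ℕ) : gaps (Fin.partialSum (g + 1)) = g := by
  funext i
  simp [gaps, Fin.partialSum_succ]

section Positions

/-- The paper's `0 = β_0 < β_1 < ⋯ < β_ℓ < β_{ℓ+1} = n + 1`, for `β` encoded 0-indexed. -/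
def extPositions (n : ℕ) {ℓ : ℕ} (β : Fin ℓ → Fin n) : Fin (ℓ + 2) → ℕ :=
  extSeq n ℓ (fun i ↦ (β i : ℕ) + 1)

variable {n ℓ : ℕ}

theorem gapCoeff_eq_prod_choose_gaps {m : ℕ} (β : Fin ℓ → Fin n) (γ : Fin ℓ → Fin m) :
    gapCoeff n m ℓ β γ = ∏ k, (gaps (extPositions n β) k).choose (gaps (extPositions m γ) k) :=
  rfl

@[simp] theorem extPositions_zero (β : Fin ℓ → Fin n) : extPositions n β 0 = 0 := rfl

@[simp] theorem extPositions_last (β : Fin ℓ → Fin n) :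
    extPositions n β (Fin.last _) = n + 1 := by
  simp [extPositions, extSeq]

@[simp] theorem extPositions_castSucc_succ (β : Fin ℓ → Fin n) (j : Fin ℓ) :
    extPositions n β j.castSucc.succ = β j + 1 := by
  simp [extPositions, extSeq, j.isLt.ne]

theorem strictMono_extPositions {β : Fin ℓ → Fin n} (hβ : StrictMono β) :
    StrictMono (extPositions n β) := by
  refine Fin.strictMono_iff_lt_succ.2 fun i ↦ ?_
  simp only [extPositions, extSeq, Fin.val_castSucc, Fin.val_succ]
  have := i.isLt
  split_ifs <;> first
    | contradiction
    | omega
    | exact Nat.succ_lt_succ (β _).isLt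
    | exact Nat.succ_lt_succ (hβ (Fin.mk_lt_mk.2 (by omega)))

theorem sum_gaps_extPositions {β : Fin ℓ → Fin n} (hβ : StrictMono β) :
    ∑ i, gaps (extPositions n β) i + ℓ = n := by
  have := add_partialSum_gaps_add_one (strictMono_extPositions hβ) (Fin.last _)
  rw [extPositions_zero, zero_add, extPositions_last, partialSum_add_one_last] at this
  omega

/-- The strictly increasing map with gaps `g`: `β_j = j + g_0 + ⋯ + g_j`. -/
def ofGaps (g : Fin (ℓ + 1) → ℕ) (hg : ∑ i, g i + ℓ = n) (j : Fin ℓ) : Fin n :=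
  ⟨Fin.partialSum (g + 1) j.castSucc.succ - 1, by
    have hpos := partialSum_add_one_succ_pos g j.castSucc
    have hlt := strictMono_partialSum_add_one g (Fin.succ_lt_succ_iff.2 (Fin.castSucc_lt_last j))
    rw [Fin.succ_last, partialSum_add_one_last] at hlt
    omega⟩

theorem strictMono_ofGaps (g : Fin (ℓ + 1) → ℕ) (hg : ∑ i, g i + ℓ = n) :
    StrictMono (ofGaps g hg) := by
  intro i j hij
  have hpos := partialSum_add_one_succ_pos g i.castSucc
  have hlt := strictMono_partialSum_add_one g
    (Fin.succ_lt_succ_iff.2 (Fin.castSucc_lt_castSucc_iff.2 hij))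
  exact Nat.sub_lt_sub_right hpos hlt

theorem extPositions_ofGaps (g : Fin (ℓ + 1) → ℕ) (hg : ∑ i, g i + ℓ = n) :
    extPositions n (ofGaps g hg) = Fin.partialSum (g + 1) := by
  funext k
  induction k using Fin.cases with
  | zero => simp
  | succ i =>
    induction i using Fin.lastCases with
    | last => rw [Fin.succ_last, extPositions_last, partialSum_add_one_last]; omega
    | cast j =>
      rw [extPositions_castSucc_succ]
      exact Nat.sub_add_cancel (partialSum_add_one_succ_pos g j.castSucc)

theorem ofGaps_gaps_extPositions {β : Fin ℓ → Fin n} (hβ : StrictMono β) :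
    ofGaps (gaps (extPositions n β)) (sum_gaps_extPositions hβ) = β := by
  funext j
  ext
  have := add_partialSum_gaps_add_one (strictMono_extPositions hβ) j.castSucc.succ
  simp only [extPositions_zero, zero_add, extPositions_castSucc_succ] at this
  simp [ofGaps, this]

theorem sum_strictMono_eq_sum_antidiagonalTuple {M : Type*} [AddCommMonoid M] (hℓn : ℓ ≤ n)
    (F : (Fin (ℓ + 1) → ℕ) → M) :
    ∑ β ∈ univ.filter (fun β : Fin ℓ → Fin n => ∀ i j : Fin ℓ, i < j → β i < β j),
        F (gaps (extPositions n β))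
      = ∑ g ∈ antidiagonalTuple (ℓ + 1) (n - ℓ), F g := by
  have hsum {g} (hg : g ∈ antidiagonalTuple (ℓ + 1) (n - ℓ)) : ∑ i, g i + ℓ = n := by
    rw [mem_antidiagonalTuple.1 hg]
    omega
  refine sum_bij' (fun β _ ↦ gaps (extPositions n β)) (fun g hg ↦ ofGaps g (hsum hg))
    ?_ ?_ ?_ ?_ (fun _ _ ↦ rfl)
  · intro β hβ
    have := sum_gaps_extPositions fun i j h ↦ (mem_filter.1 hβ).2 i j h
    rw [mem_antidiagonalTuple]
    omega
  · intro g _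
    simp only [mem_filter, mem_univ, true_and]
    exact fun i j h ↦ strictMono_ofGaps g _ h
  · intro β hβ
    exact ofGaps_gaps_extPositions fun i j h ↦ (mem_filter.1 hβ).2 i j h
  · intro g _
    rw [extPositions_ofGaps, gaps_partialSum_add_one]

end Positions

/-- eqs. (3.25) and (3.26): for `0 ≤ ℓ ≤ m ≤ n`,
(a) for every `ℓ`-subset `γ` of `{1,…,m}`, `Σ_β c(β,γ) = C(n,m)`, and
(b) for every `ℓ`-subset `β` of `{1,…,n}`, `Σ_γ c(β,γ) = C(n-ℓ, m-ℓ)`. -/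
theorem gapCoeff_sums (n m ℓ : ℕ) (hlm : ℓ ≤ m) (hmn : m ≤ n) :
    (∀ γ : Fin ℓ → Fin m, (∀ i j : Fin ℓ, i < j → γ i < γ j) →
      ∑ β ∈ Finset.univ.filter
          (fun β : Fin ℓ → Fin n => ∀ i j : Fin ℓ, i < j → β i < β j),
        gapCoeff n m ℓ β γ = n.choose m)
    ∧ (∀ β : Fin ℓ → Fin n, (∀ i j : Fin ℓ, i < j → β i < β j) →
      ∑ γ ∈ Finset.univ.filter
          (fun γ : Fin ℓ → Fin m => ∀ i j : Fin ℓ, i < j → γ i < γ j),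
        gapCoeff n m ℓ β γ = (n - ℓ).choose (m - ℓ)) := by
  have hℓn := hlm.trans hmn
  refine ⟨fun γ hγ ↦ ?_, fun β hβ ↦ ?_⟩
  · calc _ = ∑ g ∈ antidiagonalTuple (ℓ + 1) (n - ℓ),
            ∏ k, (g k).choose (gaps (extPositions m γ) k) := by
          simp only [gapCoeff_eq_prod_choose_gaps]
          exact sum_strictMono_eq_sum_antidiagonalTuple hℓn
            fun g ↦ ∏ k, (g k).choose (gaps (extPositions m γ) k)
      _ = (n - ℓ + ℓ).choose (∑ k, gaps (extPositions m γ) k + ℓ) :=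
          sum_antidiagonalTuple_prod_choose_upper _ _
      _ = n.choose m := by
          rw [Nat.sub_add_cancel hℓn, sum_gaps_extPositions fun i j h ↦ hγ i j h]
  · calc _ = ∑ h ∈ antidiagonalTuple (ℓ + 1) (m - ℓ),
            ∏ k, (gaps (extPositions n β) k).choose (h k) := by
          simp only [gapCoeff_eq_prod_choose_gaps]
          exact sum_strictMono_eq_sum_antidiagonalTuple hlm
            fun h ↦ ∏ k, (gaps (extPositions n β) k).choose (h k)
      _ = (∑ k, gaps (extPositions n β) k).choose (m - ℓ) :=
          sum_antidiagonalTuple_prod_choose_lower _ _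
      _ = (n - ℓ).choose (m - ℓ) := by
          have := sum_gaps_extPositions fun i j h ↦ hβ i j h
          congr 1
          omega
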